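/- Let A₁, A₂ be Hopf algebras with Hopf subalgebras Uᵢ ⊂ Aᵢ, (H, R) a quasitriangular Hopf algebra with Hopf algebra morphisms φᵢ : H → Aᵢ, and J = (φ₁ ⊗ φ₂ ⊗ φ₁ ⊗ φ₂)(R₂₃) the associated twisting element of A₁ ⊗ A₂. If (φ₂ ⊗ φ₁)(R) ∈ U₂ ⊗ U₁ + A₂ ⊗ [U₁, U₁], then U₁ ⊗ U₂ is a right strongly coisotropic subalgebra of the twisted Hopf algebra (A₁ ⊗ A₂)_J, i.e. Δ_{(A₁⊗A₂)_J}(U₁ ⊗ U₂) ⊂ (U₁⊗U₂) ⊗ (U₁⊗U₂) + (A₁⊗A₂) ⊗ [U₁⊗U₂, U₁⊗U₂]. -/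

import Mathlib

/-!
The comultiplication of `A₁ ⊗ A₂` is multiplicative and maps `U₁ ⊗ U₂` into
`(U₁ ⊗ U₂) ⊗ (U₁ ⊗ U₂)`, and `W = (U₁ ⊗ U₂) ⊗ (U₁ ⊗ U₂) + (A₁ ⊗ A₂) ⊗ [U₁ ⊗ U₂, U₁ ⊗ U₂]` is
closed under multiplication because `[U, U]` is a two-sided ideal of `U`. So it suffices that
`J` and `J⁻¹` lie in `W`. Both are images under the algebra map `b ⊗ a ↦ (1 ⊗ b) ⊗ (a ⊗ 1)`,
which sends `U₂ ⊗ U₁ + A₂ ⊗ [U₁, U₁]` into `W`, of `(φ₂ ⊗ φ₁)(R)` and of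
`(φ₂ ⊗ φ₁)(R⁻¹) = (S ⊗ id)((φ₂ ⊗ φ₁)(R))`; the latter stays in `U₂ ⊗ U₁ + A₂ ⊗ [U₁, U₁]`
since `S(U₂) ⊆ U₂`. The identity `R⁻¹ = (S ⊗ id)(R)` comes from applying
`a ⊗ b ⊗ c ↦ S(a) b ⊗ c` to `(Δ ⊗ id)(R) = R₁₃ R₂₃`.
-/

open TensorProduct

universe u

/-- A quasitriangular structure on a Hopf algebra `H`: an invertible element
`R ∈ H ⊗ H` with `Δᵒᵖ = R Δ R⁻¹` and the hexagon identities
`(I ⊗ Δ)(R) = R₁₃R₁₂`, `(Δ ⊗ I)(R) = R₁₃R₂₃`. -/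
structure QuasiTriangular (K H : Type u) [Field K] [Ring H] [HopfAlgebra K H] where
  R : H ⊗[K] H
  Rinv : H ⊗[K] H
  mul_inv : R * Rinv = 1
  inv_mul : Rinv * R = 1
  /-- `Δᵒᵖ(h) R = R Δ(h)`, i.e. `Δᵒᵖ = R Δ R⁻¹`. -/
  compat : ∀ h : H,
    (TensorProduct.comm K H H) (Coalgebra.comul (R := K) h) * R = R * Coalgebra.comul (R := K) h
  /-- `(I ⊗ Δ)(R) = R₁₃ R₁₂` in `H ⊗ (H ⊗ H)`. -/
  hex1 : LinearMap.lTensor H (Coalgebra.comul (R := K) (A := H)) R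
    = Algebra.TensorProduct.map (AlgHom.id K H) Algebra.TensorProduct.includeRight R
      * Algebra.TensorProduct.map (AlgHom.id K H) Algebra.TensorProduct.includeLeft R
  /-- `(Δ ⊗ I)(R) = R₁₃ R₂₃` in `H ⊗ (H ⊗ H)`. -/
  hex2 : Algebra.TensorProduct.assoc (R := K) (S := K) (T := K) (A := H) (C := H) (D := H)
      (LinearMap.rTensor H (Coalgebra.comul (R := K) (A := H)) R)
    = Algebra.TensorProduct.map (AlgHom.id K H) Algebra.TensorProduct.includeRight R
      * (Algebra.TensorProduct.includeRight : (H ⊗[K] H) →ₐ[K] H ⊗[K] (H ⊗[K] H)) R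

section defs

variable (K : Type u) [Field K]

/-- the image of `p ⊗ q` in `M ⊗ N`, for submodules `p ⊆ M`, `q ⊆ N`. -/
noncomputable def tpSubM {M N : Type u} [AddCommMonoid M] [Module K M]
    [AddCommMonoid N] [Module K N] (p : Submodule K M) (q : Submodule K N) :
    Submodule K (M ⊗[K] N) :=
  Submodule.map₂ (TensorProduct.mk K M N) p q

/-- the two-sided ideal generated by the commutators of a (subalgebra given as a)
submodule `S`, spanned by the elements `a(bc − cb)d` with `a,b,c,d ∈ S`. -/
def commIdealS {A : Type u} [Ring A] [Algebra K A] (S : Submodule K A) : Submodule K A :=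
  Submodule.span K
    {z : A | ∃ a ∈ S, ∃ b ∈ S, ∃ c ∈ S, ∃ d ∈ S, z = a * (b * c - c * b) * d}

end defs

section TensorSubmodule

variable {K : Type u} [Field K]

theorem tmul_mem_tpSubM {M N : Type u} [AddCommMonoid M] [Module K M] [AddCommMonoid N]
    [Module K N] {p : Submodule K M} {q : Submodule K N} {m : M} {n : N}
    (hm : m ∈ p) (hn : n ∈ q) : m ⊗ₜ[K] n ∈ tpSubM K p q :=
  Submodule.apply_mem_map₂ _ hm hn

theorem tpSubM_mono {M N : Type u} [AddCommMonoid M] [Module K M] [AddCommMonoid N]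
    [Module K N] {p p' : Submodule K M} {q q' : Submodule K N} (hp : p ≤ p') (hq : q ≤ q') :
    tpSubM K p q ≤ tpSubM K p' q' :=
  Submodule.map₂_le_map₂ hp hq

theorem map_tpSubM {M N M' N' : Type u} [AddCommMonoid M] [Module K M] [AddCommMonoid N]
    [Module K N] [AddCommMonoid M'] [Module K M'] [AddCommMonoid N'] [Module K N']
    (f : M →ₗ[K] M') (g : N →ₗ[K] N') (p : Submodule K M) (q : Submodule K N) :
    (tpSubM K p q).map (TensorProduct.map f g) = tpSubM K (p.map f) (q.map g) := by
  rw [tpSubM, tpSubM, Submodule.map_map₂, Submodule.map₂_map_map]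
  rfl

theorem map_tensorTensorTensorComm_tpSubM_le {M N P Q : Type u} [AddCommMonoid M] [Module K M]
    [AddCommMonoid N] [Module K N] [AddCommMonoid P] [Module K P] [AddCommMonoid Q] [Module K Q]
    (p : Submodule K M) (p' : Submodule K N) (q : Submodule K P) (q' : Submodule K Q) :
    (tpSubM K (tpSubM K p p') (tpSubM K q q')).map
        (TensorProduct.tensorTensorTensorComm K M N P Q).toLinearMap ≤
      tpSubM K (tpSubM K p q) (tpSubM K p' q') := by
  unfold tpSubM
  rw [Submodule.map₂_eq_span_image2 _ p, Submodule.map₂_eq_span_image2 _ q,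
    Submodule.map₂_span_span, Submodule.map_span, Submodule.span_le]
  rintro _ ⟨_, ⟨_, ⟨a, ha, a', ha', rfl⟩, _, ⟨b, hb, b', hb', rfl⟩, rfl⟩, rfl⟩
  exact tmul_mem_tpSubM (tmul_mem_tpSubM ha hb) (tmul_mem_tpSubM ha' hb')

theorem tpSubM_mul_le {A B : Type u} [Ring A] [Algebra K A] [Ring B] [Algebra K B]
    {p p' r : Submodule K A} {q q' s : Submodule K B} (hp : p * p' ≤ r) (hq : q * q' ≤ s) :
    tpSubM K p q * tpSubM K p' q' ≤ tpSubM K r s := by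
  rw [tpSubM, tpSubM, Submodule.map₂_eq_span_image2, Submodule.map₂_eq_span_image2,
    Submodule.span_mul_span, Submodule.span_le]
  rintro _ ⟨_, ⟨a, ha, b, hb, rfl⟩, _, ⟨a', ha', b', hb', rfl⟩, rfl⟩
  change a ⊗ₜ[K] b * a' ⊗ₜ[K] b' ∈ tpSubM K r s
  rw [Algebra.TensorProduct.tmul_mul_tmul]
  exact tmul_mem_tpSubM (hp (Submodule.mul_mem_mul ha ha')) (hq (Submodule.mul_mem_mul hb hb'))

theorem map_includeLeft_le_tpSubM {A B : Type u} [Ring A] [Algebra K A] [Ring B] [Algebra K B]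
    {p : Submodule K A} {q : Submodule K B} (hq : (1 : B) ∈ q) :
    p.map (Algebra.TensorProduct.includeLeft : A →ₐ[K] A ⊗[K] B).toLinearMap ≤ tpSubM K p q := by
  rintro _ ⟨a, ha, rfl⟩
  exact tmul_mem_tpSubM ha hq

theorem map_includeRight_le_tpSubM {A B : Type u} [Ring A] [Algebra K A] [Ring B] [Algebra K B]
    {p : Submodule K A} {q : Submodule K B} (hp : (1 : A) ∈ p) :
    q.map (Algebra.TensorProduct.includeRight : B →ₐ[K] A ⊗[K] B).toLinearMap ≤ tpSubM K p q := by
  rintro _ ⟨b, hb, rfl⟩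
  exact tmul_mem_tpSubM hp hb

theorem comul_mem_tpSubM_tpSubM {A B : Type u} [Ring A] [Bialgebra K A] [Ring B] [Bialgebra K B]
    {p : Submodule K A} {q : Submodule K B}
    (hp : ∀ a ∈ p, Coalgebra.comul (R := K) a ∈ tpSubM K p p)
    (hq : ∀ b ∈ q, Coalgebra.comul (R := K) b ∈ tpSubM K q q)
    {z : A ⊗[K] B} (hz : z ∈ tpSubM K p q) :
    Coalgebra.comul (R := K) z ∈ tpSubM K (tpSubM K p q) (tpSubM K p q) := by
  have hmap : (tpSubM K p q).map (TensorProduct.map Coalgebra.comul Coalgebra.comul) ≤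
      tpSubM K (tpSubM K p p) (tpSubM K q q) := by
    rw [map_tpSubM]
    exact tpSubM_mono (Submodule.map_le_iff_le_comap.2 hp) (Submodule.map_le_iff_le_comap.2 hq)
  exact map_tensorTensorTensorComm_tpSubM_le p p q q
    (Submodule.mem_map_of_mem (hmap (Submodule.mem_map_of_mem hz)))

end TensorSubmodule

section CommutatorIdeal

variable {K : Type u} [Field K] {A : Type u} [Ring A] [Algebra K A] {S : Submodule K A}

theorem commIdealS_mono {T : Submodule K A} (h : S ≤ T) : commIdealS K S ≤ commIdealS K T := by
  refine Submodule.span_mono ?_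
  rintro _ ⟨a, ha, b, hb, c, hc, d, hd, rfl⟩
  exact ⟨a, h ha, b, h hb, c, h hc, d, h hd, rfl⟩

theorem commIdealS_le (hS : S * S ≤ S) : commIdealS K S ≤ S := by
  have hmul : ∀ {a b}, a ∈ S → b ∈ S → a * b ∈ S := fun ha hb => hS (Submodule.mul_mem_mul ha hb)
  rw [commIdealS, Submodule.span_le]
  rintro _ ⟨a, ha, b, hb, c, hc, d, hd, rfl⟩
  exact hmul (hmul ha (Submodule.sub_mem _ (hmul hb hc) (hmul hc hb))) hd

theorem mul_commIdealS_le (hS : S * S ≤ S) : S * commIdealS K S ≤ commIdealS K S := by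
  refine Submodule.mul_le.2 fun s hs z hz => ?_
  refine (Submodule.span_le (p := (commIdealS K S).comap (LinearMap.mulLeft K s))).2 ?_ hz
  rintro _ ⟨a, ha, b, hb, c, hc, d, hd, rfl⟩
  exact Submodule.subset_span
    ⟨s * a, hS (Submodule.mul_mem_mul hs ha), b, hb, c, hc, d, hd, by simp [mul_assoc]⟩

theorem commIdealS_mul_le (hS : S * S ≤ S) : commIdealS K S * S ≤ commIdealS K S := by
  refine Submodule.mul_le.2 fun z hz s hs => ?_
  refine (Submodule.span_le (p := (commIdealS K S).comap (LinearMap.mulRight K s))).2 ?_ hz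
  rintro _ ⟨a, ha, b, hb, c, hc, d, hd, rfl⟩
  exact Submodule.subset_span
    ⟨a, ha, b, hb, c, hc, d * s, hS (Submodule.mul_mem_mul hd hs), by simp [mul_assoc]⟩

theorem map_commIdealS_le {B : Type u} [Ring B] [Algebra K B] (f : A →ₐ[K] B) :
    (commIdealS K S).map f.toLinearMap ≤ commIdealS K (S.map f.toLinearMap) := by
  rw [commIdealS, Submodule.map_span]
  refine Submodule.span_mono ?_
  rintro _ ⟨_, ⟨a, ha, b, hb, c, hc, d, hd, rfl⟩, rfl⟩
  exact ⟨f a, Submodule.mem_map_of_mem ha, f b, Submodule.mem_map_of_mem hb,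
    f c, Submodule.mem_map_of_mem hc, f d, Submodule.mem_map_of_mem hd, by simp⟩

end CommutatorIdeal

section CoisotropicTarget

variable {K : Type u} [Field K]

/-- `V ⊗ S + B ⊗ [S, S]`: a subalgebra `U` is right strongly coisotropic when
`Δ(U) ⊆ coisotropicTarget U U`. -/
noncomputable def coisotropicTarget {A B : Type u} [Ring A] [Algebra K A] [AddCommMonoid B]
    [Module K B] (V : Submodule K B) (S : Submodule K A) : Submodule K (B ⊗[K] A) :=
  tpSubM K V S ⊔ tpSubM K ⊤ (commIdealS K S)

theorem map_coisotropicTarget_le {A B A' B' : Type u} [Ring A] [Algebra K A] [AddCommMonoid B]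
    [Module K B] [Ring A'] [Algebra K A'] [AddCommMonoid B'] [Module K B']
    {V : Submodule K B} {S : Submodule K A} {V' : Submodule K B'} {S' : Submodule K A'}
    (f : B →ₗ[K] B') (g : A →ₐ[K] A') (hV : V.map f ≤ V') (hS : S.map g.toLinearMap ≤ S') :
    (coisotropicTarget V S).map (TensorProduct.map f g.toLinearMap) ≤
      coisotropicTarget V' S' := by
  rw [coisotropicTarget, Submodule.map_sup, map_tpSubM, map_tpSubM]
  exact sup_le_sup (tpSubM_mono hV hS)
    (tpSubM_mono le_top ((map_commIdealS_le g).trans (commIdealS_mono hS)))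

theorem coisotropicTarget_mul_le {A B : Type u} [Ring A] [Algebra K A] [Ring B] [Algebra K B]
    {V : Submodule K B} {S : Submodule K A} (hV : V * V ≤ V) (hS : S * S ≤ S) :
    coisotropicTarget V S * coisotropicTarget V S ≤ coisotropicTarget V S := by
  have hCC : commIdealS K S * commIdealS K S ≤ commIdealS K S :=
    (mul_le_mul' le_rfl (commIdealS_le hS)).trans (commIdealS_mul_le hS)
  rw [coisotropicTarget, Submodule.sup_mul, Submodule.mul_sup, Submodule.mul_sup]
  exact sup_le (sup_le (le_sup_of_le_left (tpSubM_mul_le hV hS))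
      (le_sup_of_le_right (tpSubM_mul_le le_top (mul_commIdealS_le hS))))
    (sup_le (le_sup_of_le_right (tpSubM_mul_le le_top (commIdealS_mul_le hS)))
      (le_sup_of_le_right (tpSubM_mul_le le_top hCC)))

end CoisotropicTarget

section MulFirstLegs

variable {K H : Type*} [CommSemiring K] [Semiring H] [Algebra K H]

noncomputable def mulFirstLegs (f : H →ₗ[K] H) : H ⊗[K] (H ⊗[K] H) →ₗ[K] H ⊗[K] H :=
  LinearMap.rTensor H (LinearMap.mul' K H ∘ₗ LinearMap.rTensor H f) ∘ₗ
    (TensorProduct.assoc K H H H).symm.toLinearMap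

@[simp] theorem mulFirstLegs_tmul (f : H →ₗ[K] H) (a b c : H) :
    mulFirstLegs f (a ⊗ₜ[K] (b ⊗ₜ[K] c)) = (f a * b) ⊗ₜ[K] c := by
  simp [mulFirstLegs]

theorem mulFirstLegs_assoc (f : H →ₗ[K] H) (w : (H ⊗[K] H) ⊗[K] H) :
    mulFirstLegs f (Algebra.TensorProduct.assoc K K K H H H w) =
      LinearMap.rTensor H (LinearMap.mul' K H ∘ₗ LinearMap.rTensor H f) w :=
  congrArg _ ((TensorProduct.assoc K H H H).symm_apply_apply w)

/-- `mulFirstLegs f (x₁₃ y₂₃) = (f ⊗ id)(x) y`. -/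
theorem mulFirstLegs_mul (f : H →ₗ[K] H) (x y : H ⊗[K] H) :
    mulFirstLegs f (Algebra.TensorProduct.map (AlgHom.id K H)
        (Algebra.TensorProduct.includeRight (A := H) (B := H)) x *
      (Algebra.TensorProduct.includeRight : H ⊗[K] H →ₐ[K] H ⊗[K] (H ⊗[K] H)) y) =
      LinearMap.rTensor H f x * y := by
  induction x using TensorProduct.induction_on with
  | zero => simp
  | add x₁ x₂ h₁ h₂ => simp only [map_add, add_mul, h₁, h₂]
  | tmul a b =>
    induction y using TensorProduct.induction_on with
    | zero => simp
    | add y₁ y₂ h₁ h₂ => simp only [map_add, mul_add, h₁, h₂]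
    | tmul c d => simp [Algebra.TensorProduct.tmul_mul_tmul]

end MulFirstLegs

namespace QuasiTriangular

variable {K H : Type u} [Field K] [Ring H] [HopfAlgebra K H]

theorem rTensor_comul_R (Q : QuasiTriangular K H) (f : H →ₗ[K] H) :
    LinearMap.rTensor H (LinearMap.mul' K H ∘ₗ LinearMap.rTensor H f ∘ₗ Coalgebra.comul) Q.R =
      LinearMap.rTensor H f Q.R * Q.R := by
  have h := congrArg (mulFirstLegs f) Q.hex2
  rwa [mulFirstLegs_mul, mulFirstLegs_assoc, ← LinearMap.rTensor_comp_apply,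
    LinearMap.comp_assoc] at h

theorem rTensor_counit_R (Q : QuasiTriangular K H) :
    LinearMap.rTensor H (Algebra.linearMap K H ∘ₗ Coalgebra.counit) Q.R = 1 := by
  have hid : LinearMap.mul' K H ∘ₗ LinearMap.rTensor H (Algebra.linearMap K H ∘ₗ
      Coalgebra.counit) ∘ₗ Coalgebra.comul = LinearMap.id := by
    ext a
    simp [LinearMap.rTensor_comp_apply, Coalgebra.rTensor_counit_comul]
  have h := Q.rTensor_comul_R (Algebra.linearMap K H ∘ₗ Coalgebra.counit)
  rw [hid, LinearMap.rTensor_id, LinearMap.id_apply] at h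
  calc _ = _ * (Q.R * Q.Rinv) := by rw [Q.mul_inv, mul_one]
    _ = 1 := by rw [← mul_assoc, ← h, Q.mul_inv]

theorem Rinv_eq_rTensor_antipode (Q : QuasiTriangular K H) :
    Q.Rinv = LinearMap.rTensor H (HopfAlgebra.antipode K) Q.R := by
  have h : LinearMap.rTensor H (HopfAlgebra.antipode K) Q.R * Q.R = 1 := by
    rw [← Q.rTensor_comul_R, HopfAlgebra.mul_antipode_rTensor_comul, Q.rTensor_counit_R]
  exact (left_inv_eq_right_inv h Q.mul_inv).symm

end QuasiTriangular

theorem stmt17_general {K H A₁ A₂ : Type u} [Field K] [Ring H] [HopfAlgebra K H]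
    [Ring A₁] [HopfAlgebra K A₁] [Ring A₂] [HopfAlgebra K A₂]
    (Q : QuasiTriangular K H)
    -- Hopf algebra morphisms φᵢ : H → Aᵢ
    (φ₁ : H →ₐc[K] A₁) (φ₂ : H →ₐc[K] A₂)
    (hS₂ : ∀ h : H, φ₂ (HopfAlgebra.antipode (R := K) h) = HopfAlgebra.antipode (R := K) (φ₂ h))
    -- Hopf subalgebras Uᵢ ⊆ Aᵢ
    (U₁ : Subalgebra K A₁) (U₂ : Subalgebra K A₂)
    (hU₁Δ : ∀ u ∈ U₁, Coalgebra.comul (R := K) u ∈ tpSubM K U₁.toSubmodule U₁.toSubmodule)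
    (hU₂Δ : ∀ u ∈ U₂, Coalgebra.comul (R := K) u ∈ tpSubM K U₂.toSubmodule U₂.toSubmodule)
    (hU₂S : ∀ u ∈ U₂, HopfAlgebra.antipode (R := K) u ∈ U₂)
    -- the compatibility hypothesis (φ₂ ⊗ φ₁)(R) ∈ U₂ ⊗ U₁ + A₂ ⊗ [U₁, U₁]
    (hR : TensorProduct.map (φ₂ : H →ₗ[K] A₂) (φ₁ : H →ₗ[K] A₁) Q.R
      ∈ tpSubM K U₂.toSubmodule U₁.toSubmodule
        ⊔ tpSubM K ⊤ (commIdealS K U₁.toSubmodule))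
    -- the twisting element J = (φ₁ ⊗ φ₂ ⊗ φ₁ ⊗ φ₂)(R₂₃) and its inverse
    (J Ji : (A₁ ⊗[K] A₂) ⊗[K] (A₁ ⊗[K] A₂))
    (hJ : J = Algebra.TensorProduct.map
      ((Algebra.TensorProduct.includeRight : A₂ →ₐ[K] A₁ ⊗[K] A₂).comp (φ₂ : H →ₐ[K] A₂))
      ((Algebra.TensorProduct.includeLeft : A₁ →ₐ[K] A₁ ⊗[K] A₂).comp (φ₁ : H →ₐ[K] A₁)) Q.R)
    (hJi : Ji = Algebra.TensorProduct.map
      ((Algebra.TensorProduct.includeRight : A₂ →ₐ[K] A₁ ⊗[K] A₂).comp (φ₂ : H →ₐ[K] A₂))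
      ((Algebra.TensorProduct.includeLeft : A₁ →ₐ[K] A₁ ⊗[K] A₂).comp (φ₁ : H →ₐ[K] A₁)) Q.Rinv) :
    -- then U₁ ⊗ U₂ is right strongly coisotropic in (A₁ ⊗ A₂)_J :
    ∀ z ∈ tpSubM K U₁.toSubmodule U₂.toSubmodule,
      Ji * Coalgebra.comul (R := K) z * J ∈
        tpSubM K (tpSubM K U₁.toSubmodule U₂.toSubmodule)
          (tpSubM K U₁.toSubmodule U₂.toSubmodule)
        ⊔ tpSubM K ⊤ (commIdealS K (tpSubM K U₁.toSubmodule U₂.toSubmodule)) := by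
  intro z hz
  set U := tpSubM K U₁.toSubmodule U₂.toSubmodule
  have hUU : U * U ≤ U := tpSubM_mul_le (Subalgebra.isIdempotentElem_toSubmodule U₁).le
    (Subalgebra.isIdempotentElem_toSubmodule U₂).le
  have hφ : ∀ w : H ⊗[K] H,
      TensorProduct.map (φ₂ : H →ₗ[K] A₂) (φ₁ : H →ₗ[K] A₁) w ∈
        coisotropicTarget U₂.toSubmodule U₁.toSubmodule →
      Algebra.TensorProduct.map
        ((Algebra.TensorProduct.includeRight : A₂ →ₐ[K] A₁ ⊗[K] A₂).comp (φ₂ : H →ₐ[K] A₂))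
        ((Algebra.TensorProduct.includeLeft : A₁ →ₐ[K] A₁ ⊗[K] A₂).comp (φ₁ : H →ₐ[K] A₁)) w ∈
        coisotropicTarget U U := fun w hw =>
    map_coisotropicTarget_le _ _ (map_includeRight_le_tpSubM U₁.one_mem)
      (map_includeLeft_le_tpSubM U₂.one_mem)
      (Submodule.mem_map.2 ⟨_, hw, by rw [TensorProduct.map_map]; rfl⟩)
  have hRinv : TensorProduct.map (φ₂ : H →ₗ[K] A₂) (φ₁ : H →ₗ[K] A₁) Q.Rinv ∈
      coisotropicTarget U₂.toSubmodule U₁.toSubmodule := by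
    have hcomm : (φ₂ : H →ₗ[K] A₂) ∘ₗ HopfAlgebra.antipode K =
        HopfAlgebra.antipode K ∘ₗ (φ₂ : H →ₗ[K] A₂) := LinearMap.ext hS₂
    rw [Q.Rinv_eq_rTensor_antipode, LinearMap.rTensor, TensorProduct.map_map, hcomm,
      LinearMap.comp_id, ← LinearMap.id_comp (φ₁ : H →ₗ[K] A₁), ← TensorProduct.map_map]
    exact map_coisotropicTarget_le _ (AlgHom.id K A₁) (Submodule.map_le_iff_le_comap.2 hU₂S)
      (by rw [AlgHom.toLinearMap_id, Submodule.map_id]) (Submodule.mem_map_of_mem hR)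
  have hΔ : Coalgebra.comul (R := K) z ∈ coisotropicTarget U U :=
    Submodule.mem_sup_left (comul_mem_tpSubM_tpSubM hU₁Δ hU₂Δ hz)
  have hmul := coisotropicTarget_mul_le hUU hUU
  rw [hJ, hJi]
  exact hmul (Submodule.mul_mem_mul (hmul (Submodule.mul_mem_mul (hφ _ hRinv) hΔ)) (hφ _ hR))

theorem stmt17 {K H A₁ A₂ : Type u} [Field K] [Ring H] [HopfAlgebra K H]
    [Ring A₁] [HopfAlgebra K A₁] [Ring A₂] [HopfAlgebra K A₂]
    (Q : QuasiTriangular K H)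
    -- Hopf algebra morphisms φᵢ : H → Aᵢ
    (φ₁ : H →ₐc[K] A₁) (φ₂ : H →ₐc[K] A₂)
    (hS₁ : ∀ h : H, φ₁ (HopfAlgebra.antipode (R := K) h) = HopfAlgebra.antipode (R := K) (φ₁ h))
    (hS₂ : ∀ h : H, φ₂ (HopfAlgebra.antipode (R := K) h) = HopfAlgebra.antipode (R := K) (φ₂ h))
    -- Hopf subalgebras Uᵢ ⊆ Aᵢ
    (U₁ : Subalgebra K A₁) (U₂ : Subalgebra K A₂)
    (hU₁Δ : ∀ u ∈ U₁, Coalgebra.comul (R := K) u ∈ tpSubM K U₁.toSubmodule U₁.toSubmodule)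
    (hU₂Δ : ∀ u ∈ U₂, Coalgebra.comul (R := K) u ∈ tpSubM K U₂.toSubmodule U₂.toSubmodule)
    (hU₁S : ∀ u ∈ U₁, HopfAlgebra.antipode (R := K) u ∈ U₁)
    (hU₂S : ∀ u ∈ U₂, HopfAlgebra.antipode (R := K) u ∈ U₂)
    -- the compatibility hypothesis (φ₂ ⊗ φ₁)(R) ∈ U₂ ⊗ U₁ + A₂ ⊗ [U₁, U₁]
    (hR : TensorProduct.map (φ₂ : H →ₗ[K] A₂) (φ₁ : H →ₗ[K] A₁) Q.R
      ∈ tpSubM K U₂.toSubmodule U₁.toSubmodule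
        ⊔ tpSubM K ⊤ (commIdealS K U₁.toSubmodule))
    -- the twisting element J = (φ₁ ⊗ φ₂ ⊗ φ₁ ⊗ φ₂)(R₂₃) and its inverse
    (J Ji : (A₁ ⊗[K] A₂) ⊗[K] (A₁ ⊗[K] A₂))
    (hJ : J = Algebra.TensorProduct.map
      ((Algebra.TensorProduct.includeRight : A₂ →ₐ[K] A₁ ⊗[K] A₂).comp (φ₂ : H →ₐ[K] A₂))
      ((Algebra.TensorProduct.includeLeft : A₁ →ₐ[K] A₁ ⊗[K] A₂).comp (φ₁ : H →ₐ[K] A₁)) Q.R)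
    (hJi : Ji = Algebra.TensorProduct.map
      ((Algebra.TensorProduct.includeRight : A₂ →ₐ[K] A₁ ⊗[K] A₂).comp (φ₂ : H →ₐ[K] A₂))
      ((Algebra.TensorProduct.includeLeft : A₁ →ₐ[K] A₁ ⊗[K] A₂).comp (φ₁ : H →ₐ[K] A₁)) Q.Rinv) :
    -- then U₁ ⊗ U₂ is right strongly coisotropic in (A₁ ⊗ A₂)_J :
    ∀ z ∈ tpSubM K U₁.toSubmodule U₂.toSubmodule,
      Ji * Coalgebra.comul (R := K) z * J ∈
        tpSubM K (tpSubM K U₁.toSubmodule U₂.toSubmodule)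
          (tpSubM K U₁.toSubmodule U₂.toSubmodule)
        ⊔ tpSubM K ⊤ (commIdealS K (tpSubM K U₁.toSubmodule U₂.toSubmodule)) :=
  stmt17_general Q φ₁ φ₂ hS₂ U₁ U₂ hU₁Δ hU₂Δ hU₂S hR J Ji hJ hJi
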